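/- Let (z_i)_{i≥1} be a sequence of positive integers, let m ≥ 0, and define M_0 = m, M_t = max(M_{t-1}, z_t) - 1 for t ≥ 1. Fix integers 0 < ℓ_1 < ℓ_2 < ... < ℓ_k such that M_{ℓ_i} = M_{ℓ_i - 1} - 1 for all 1 ≤ i ≤ k, and let S = {ℓ_1,...,ℓ_k}. Let f(i) be the i-th element of {1,2,...} \ S in increasing order, and define the censored chain by M'_0 = m, M'_t = max(M'_{t-1}, z_{f(t)}) - 1 for t ≥ 1. Then min_{1 ≤ t ≤ ℓ_k - k} M'_t ≥ min_{1 ≤ t ≤ ℓ_k} M_t. -/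

import Mathlib

/-!
Couple the two chains along the kept indices `f(1) < f(2) < ⋯`. Every index strictly between
two consecutive kept ones is a deleted down-step, so along such a run the original chain only
decreases; hence `M_{f(t+1) - 1} ≤ M_{f(t)}`. Since `x ↦ max(x, w) - 1` is monotone, the
invariant `M_{f(t) - 1} ≤ M'_{t-1}` propagates to `M_{f(t)} ≤ M'_t`. Finally only the `|S|` indices
of `S` are missing among `1, …, ℓ_k`, so `f(t) ≤ ℓ_k` whenever `t ≤ ℓ_k - |S|`, and then `M_{f(t)}`
occurs in the minimum over `1 ≤ t ≤ ℓ_k`.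
-/

/-- The chain `M_0 = m0`, `M_t = max (M_{t-1}, z_t) - 1`. -/
def chainM (m0 : ℕ) (z : ℕ → ℕ) : ℕ → ℕ
  | 0 => m0
  | n + 1 => max (chainM m0 z n) (z (n + 1)) - 1

theorem Nat.apply_le_of_forall_succ_le {α : Type*} [Preorder α] {f : ℕ → α} {a b : ℕ}
    (hab : a ≤ b) (h : ∀ n, a ≤ n → n < b → f (n + 1) ≤ f n) : f b ≤ f a := by
  induction b, hab using Nat.le_induction with
  | base => exact le_rfl
  | succ b hab ih =>
    exact (h b hab b.lt_succ_self).trans (ih fun n han hnb => h n han (hnb.trans b.lt_succ_self))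

section Counting

variable {p : ℕ → Prop} {S : Finset ℕ}

theorem Nat.infinite_setOf_of_forall_pos_notMem (hS : ∀ a, 0 < a → a ∉ S → p a) :
    (Set.ofPred p).Infinite := by
  refine Set.infinite_of_finite_compl ((insert 0 S : Finset ℕ).finite_toSet.subset ?_)
  intro a ha
  by_contra hmem
  simp only [Finset.coe_insert, Set.mem_insert_iff, Finset.mem_coe, not_or] at hmem
  exact ha (hS a (Nat.pos_of_ne_zero hmem.1) hmem.2)

theorem Nat.sub_card_le_count [DecidablePred p] (hS : ∀ a, 0 < a → a ∉ S → p a) (n : ℕ) :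
    n - S.card ≤ Nat.count p (n + 1) := by
  have hsub : Finset.Icc 1 n \ S ⊆ (Finset.range (n + 1)).filter p := by
    intro a ha
    simp only [Finset.mem_sdiff, Finset.mem_Icc] at ha
    simp only [Finset.mem_filter, Finset.mem_range]
    exact ⟨by omega, hS a ha.1.1 ha.2⟩
  calc n - S.card = (Finset.Icc 1 n).card - S.card := by rw [Nat.card_Icc, Nat.add_sub_cancel]
    _ ≤ (Finset.Icc 1 n \ S).card := Finset.le_card_sdiff _ _
    _ ≤ Nat.count p (n + 1) := by
      rw [Nat.count_eq_card_filter_range]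
      exact Finset.card_le_card hsub

theorem Nat.nth_le_of_lt_sub_card (hS : ∀ a, 0 < a → a ∉ S → p a) {n t : ℕ}
    (ht : t < n - S.card) : Nat.nth p t ≤ n := by
  classical
  exact Nat.lt_succ_iff.1 (Nat.nth_lt_of_lt_count (ht.trans_le (Nat.sub_card_le_count hS n)))

end Counting

/-- Driving sequences are indexed from `1`: `censor p z t` is `z` at the `t`-th index
satisfying `p`. -/
noncomputable def censor (p : ℕ → Prop) (z : ℕ → ℕ) (t : ℕ) : ℕ := z (Nat.nth p (t - 1))

theorem chainM_le_succ_of_pred_le {m m' : ℕ} {z z' : ℕ → ℕ} {n t : ℕ} (hn : 0 < n)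
    (h : chainM m z (n - 1) ≤ chainM m' z' t) (hz : z n = z' (t + 1)) :
    chainM m z n ≤ chainM m' z' (t + 1) := by
  obtain ⟨n, rfl⟩ := Nat.exists_eq_add_one_of_ne_zero hn.ne'
  exact Nat.sub_le_sub_right (max_le_max h hz.le) 1

section Coupling

variable {m : ℕ} {z : ℕ → ℕ} {p : ℕ → Prop}

theorem chainM_le_of_forall_down {a b : ℕ} (hab : a ≤ b)
    (hdown : ∀ j, a < j → j ≤ b → chainM m z j ≤ chainM m z (j - 1)) :
    chainM m z b ≤ chainM m z a :=
  Nat.apply_le_of_forall_succ_le hab fun n han hnb => hdown (n + 1) (by omega) hnb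

theorem chainM_pred_nth_le_censor (hp : (Set.ofPred p).Infinite) (h0 : ¬ p 0)
    (hdown : ∀ j, 0 < j → ¬ p j → chainM m z j ≤ chainM m z (j - 1)) (t : ℕ) :
    chainM m z (Nat.nth p t - 1) ≤ chainM m (censor p z) t := by
  induction t with
  | zero =>
    refine chainM_le_of_forall_down (Nat.zero_le _) fun j hj hjn => hdown j hj fun hpj => ?_
    have : Nat.nth p 0 ≤ j := Nat.nth_zero (p := p) ▸ Nat.sInf_le hpj
    omega
  | succ t ih =>
    have hlt := (Nat.nth_lt_nth hp).2 (Nat.lt_add_one t)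
    have hrun : chainM m z (Nat.nth p (t + 1) - 1) ≤ chainM m z (Nat.nth p t) := by
      refine chainM_le_of_forall_down (a := Nat.nth p t) (b := Nat.nth p (t + 1) - 1) (by omega)
        fun j hj hjn => hdown j (by omega) fun hpj => ?_
      have := Nat.le_nth_of_lt_nth_succ (show j < Nat.nth p (t + 1) by omega) hpj
      omega
    have hpos : 0 < Nat.nth p t :=
      Nat.pos_of_ne_zero fun h => h0 (h ▸ Nat.nth_mem_of_infinite hp t)
    exact hrun.trans (chainM_le_succ_of_pred_le hpos ih rfl)

end Coupling

theorem censoring_raises_running_min_general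
    (z : ℕ → ℕ) (m : ℕ)
    (k : ℕ) (ℓ : Fin (k + 1) → ℕ)
    (hdown : ∀ i, chainM m z (ℓ i) = chainM m z (ℓ i - 1) - 1) :
    (Finset.Icc 1 (ℓ (Fin.last k))).inf (fun t => (chainM m z t : ℕ∞))
      ≤ (Finset.Icc 1 (ℓ (Fin.last k) - (k + 1))).inf
          (fun t =>
            (chainM m
              (fun t' => z (Nat.nth (fun a => 1 ≤ a ∧ ∀ i, ℓ i ≠ a) (t' - 1))) t : ℕ∞)) := by
  set p : ℕ → Prop := fun a => 1 ≤ a ∧ ∀ i, ℓ i ≠ a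
  have hkept : ∀ a, 0 < a → a ∉ Finset.univ.image ℓ → p a := fun a ha hS =>
    ⟨ha, fun i hi => hS (Finset.mem_image.2 ⟨i, Finset.mem_univ i, hi⟩)⟩
  have hp := Nat.infinite_setOf_of_forall_pos_notMem hkept
  have hcard : (Finset.univ.image ℓ).card ≤ k + 1 := Finset.card_image_le.trans (by simp)
  have hdeleted : ∀ j, 0 < j → ¬ p j → chainM m z j ≤ chainM m z (j - 1) := by
    intro j hj hpj
    obtain ⟨i, rfl⟩ : ∃ i, ℓ i = j := by
      simpa [p, Nat.one_le_iff_ne_zero.2 hj.ne'] using hpj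
    exact (hdown i).trans_le (Nat.sub_le _ 1)
  refine Finset.le_inf fun t ht => ?_
  rw [Finset.mem_Icc] at ht
  have hmem : Nat.nth p (t - 1) ∈ Finset.Icc 1 (ℓ (Fin.last k)) :=
    Finset.mem_Icc.2 ⟨(Nat.nth_mem_of_infinite hp _).1, Nat.nth_le_of_lt_sub_card hkept (by omega)⟩
  have hcouple := chainM_le_succ_of_pred_le (Finset.mem_Icc.1 hmem).1
    (chainM_pred_nth_le_censor hp (fun h => by simp [p] at h) hdeleted (t - 1)) rfl
  rw [Nat.sub_add_cancel ht.1] at hcouple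
  exact (Finset.inf_le hmem).trans (by exact_mod_cast hcouple)

/-- **Censoring down-steps raises the running minimum (Lemma 6.4).** Let `(z_i)_{i≥1}`
be positive integers, `m ≥ 0`, and `M` the chain started at `m`. Fix times
`0 < ℓ_0 < ℓ_1 < ⋯ < ℓ_k` (so `k + 1` of them) at which the chain moves down by one:
`M_{ℓ_i} = M_{ℓ_i - 1} - 1`. Let `M'` be the chain started at `m` driven by the
subsequence of `(z_i)_{i≥1}` obtained by deleting the entries with indices in
`S = {ℓ_0, ..., ℓ_k}` (the `t`-th driving value of `M'` is `z_{f(t)}`, where `f(t)` is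
the `t`-th element of `{1,2,...} \ S` in increasing order). Then
`min_{1 ≤ t ≤ ℓ_k - (k+1)} M'_t ≥ min_{1 ≤ t ≤ ℓ_k} M_t`
(the minima taken in `ℕ∞`, so an empty minimum is `⊤`). -/
theorem censoring_raises_running_min
    (z : ℕ → ℕ) (hz : ∀ i, 1 ≤ z i) (m : ℕ)
    (k : ℕ) (ℓ : Fin (k + 1) → ℕ) (hℓpos : ∀ i, 0 < ℓ i) (hmono : StrictMono ℓ)
    (hdown : ∀ i, chainM m z (ℓ i) = chainM m z (ℓ i - 1) - 1) :
    (Finset.Icc 1 (ℓ (Fin.last k))).inf (fun t => (chainM m z t : ℕ∞))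
      ≤ (Finset.Icc 1 (ℓ (Fin.last k) - (k + 1))).inf
          (fun t =>
            (chainM m
              (fun t' => z (Nat.nth (fun a => 1 ≤ a ∧ ∀ i, ℓ i ≠ a) (t' - 1))) t : ℕ∞)) :=
  censoring_raises_running_min_general z m k ℓ hdown
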